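/- arXiv:1006.3210 — 2 statements merged into one kernel-verified Lean document; each statement's English description precedes it below -/
import Mathlib

section
/- For every natural number n, applying the product of operators (X + q^{n-1} s D_q)(X + q^{n-2} s D_q) ⋯ (X + s D_q) (with the factor (X + s D_q) acting first) to the constant polynomial 1 yields the polynomial h_n(x,s). -/
/-!
Both sides satisfy `F(n+1) 1 = (X + q^n s D_q) (F(n) 1)`, so it suffices to show
`(X + q^n t D_q) h_n(x,t) = h_{n+1}(x,t)`. Write the coefficient of `x^(n-2j)` in `h_n` as a
weight depending on `j` only times the q-falling factorial `[n]_q [n-1]_q ⋯ [n-2j+1]_q`; since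
that factor vanishes for `2j > n`, all sums can be taken over a common range. Comparing
coefficients leaves `c(n+1, j+1) = c(n, j+1) + q^n t [n-2j]_q c(n, j)`, which follows from
`[n+1]_q - [n-2j-1]_q = q^(n-2j-1) [2j+2]_q` and `[2j+2]_q = (1 + q^(j+1)) [j+1]_q`.
-/

noncomputable section

/-- The field `ℚ(q,s)` of rational functions in two indeterminates. -/
abbrev F : Type := FractionRing (MvPolynomial (Fin 2) ℚ)

/-- The indeterminate `q`. -/
def q : F := algebraMap (MvPolynomial (Fin 2) ℚ) F (MvPolynomial.X 0)

/-- The indeterminate `s`. -/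
def s : F := algebraMap (MvPolynomial (Fin 2) ℚ) F (MvPolynomial.X 1)

/-- The q-integer `[n]_q = 1 + q + ⋯ + q^{n-1}`. -/
def qInt (n : ℕ) : F := ∑ i ∈ Finset.range n, q ^ i

/-- The q-factorial `[n]_q! = ∏_{k=1}^n [k]_q`. -/
def qFact (n : ℕ) : F := ∏ k ∈ Finset.range n, qInt (k + 1)

/-- The q-binomial coefficient `[n choose k]_q = [n]_q!/([k]_q! [n-k]_q!)`. -/
def qBinom (n k : ℕ) : F := qFact n / (qFact k * qFact (n - k))

/-- The operator `X` of multiplication by `x` on `F[x]`. -/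
def Xop : Module.End F (Polynomial F) := LinearMap.mulLeft F Polynomial.X

/-- Division by `x` (discarding the constant term), as a linear map. -/
def divXL : Polynomial F →ₗ[F] Polynomial F where
  toFun := Polynomial.divX
  map_add' p r := Polynomial.divX_add
  map_smul' a p := by
    ext n
    simp [Polynomial.coeff_divX, Polynomial.coeff_smul]

/-- The q-derivative `D_q f(x) = (f(qx) - f(x))/((q-1)x)`; it is the F-linear
operator on `F[x]` determined by `D_q x^n = [n]_q x^{n-1}`. -/
def Dq : Module.End F (Polynomial F) :=
  (q - 1)⁻¹ •
    (divXL ∘ₗ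
      ((Polynomial.aeval (Polynomial.C q * Polynomial.X)).toLinearMap - LinearMap.id))

/-- The polynomials `h_n(x,t) = Σ_j q^{j²} t^j [n]_q!/((1+q)⋯(1+q^j)·[j]_q!·[n-2j]_q!)
x^{n-2j}` (the parameter `t` will be specialized to `s` or `q²s`). -/
def h (t : F) (n : ℕ) : Polynomial F :=
  ∑ j ∈ Finset.range (n / 2 + 1),
    Polynomial.C (q ^ (j ^ 2) * t ^ j * qFact n /
        ((∏ i ∈ Finset.range j, (1 + q ^ (i + 1))) * qFact j * qFact (n - 2 * j))) *
      Polynomial.X ^ (n - 2 * j)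


/-- `F(n) = (X + q^{n-1} s D_q)(X + q^{n-2} s D_q) ⋯ (X + s D_q)`,
with the factor `(X + s D_q)` acting first. -/
def Fop : ℕ → Module.End F (Polynomial F)
  | 0 => 1
  | n + 1 => (Xop + (q ^ n * s) • Dq) * Fop n

open Polynomial Finset

lemma algebraMap_ne_zero_of_eval_ne_zero {σ R : Type*} [CommRing R] [IsDomain R]
    {p : MvPolynomial σ R} (v : σ → R) (hv : MvPolynomial.eval v p ≠ 0) :
    algebraMap (MvPolynomial σ R) (FractionRing (MvPolynomial σ R)) p ≠ 0 := by
  rw [Ne, IsFractionRing.to_map_eq_zero_iff]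
  rintro rfl
  simp at hv

lemma q_sub_one_ne_zero : q - 1 ≠ 0 := by
  have hq : q - 1 = algebraMap (MvPolynomial (Fin 2) ℚ) F (MvPolynomial.X 0 - 1) := by
    simp [q]
  rw [hq]
  exact algebraMap_ne_zero_of_eval_ne_zero 0 (by simp)

lemma one_add_q_pow_ne_zero (k : ℕ) : 1 + q ^ k ≠ 0 := by
  have hq : 1 + q ^ k = algebraMap (MvPolynomial (Fin 2) ℚ) F (1 + MvPolynomial.X 0 ^ k) := by
    simp [q]
  rw [hq]
  exact algebraMap_ne_zero_of_eval_ne_zero 1 (by norm_num)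

lemma qInt_succ_ne_zero (n : ℕ) : qInt (n + 1) ≠ 0 := by
  have hq : qInt (n + 1) =
      algebraMap (MvPolynomial (Fin 2) ℚ) F (∑ i ∈ range (n + 1), MvPolynomial.X 0 ^ i) := by
    simp [qInt, q]
  rw [hq]
  exact algebraMap_ne_zero_of_eval_ne_zero 1 (by simp; positivity)

lemma qFact_ne_zero (n : ℕ) : qFact n ≠ 0 :=
  prod_ne_zero_iff.mpr fun k _ => qInt_succ_ne_zero k

@[simp] lemma qInt_zero : qInt 0 = 0 := sum_range_zero _

lemma qInt_add (a b : ℕ) : qInt (a + b) = qInt a + q ^ a * qInt b := by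
  simp only [qInt, sum_range_add, mul_sum, pow_add]

lemma qInt_two_mul (j : ℕ) : qInt (2 * j) = (1 + q ^ j) * qInt j := by
  rw [two_mul, qInt_add]
  ring

lemma qFact_succ (n : ℕ) : qFact (n + 1) = qFact n * qInt (n + 1) :=
  prod_range_succ _ n

lemma divXL_apply (p : F[X]) : divXL p = divX p := rfl

lemma Dq_C_mul_X_pow (a : F) (m : ℕ) : Dq (C a * X ^ m) = C (qInt m * a) * X ^ (m - 1) := by
  have hdiff : C a * (C q * X) ^ m - C a * X ^ m = C ((q ^ m - 1) * a) * X ^ m := by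
    simp only [mul_pow, ← C_pow, C_mul, C_sub, C_1]
    ring
  have hqInt : (q - 1)⁻¹ * ((q ^ m - 1) * a) = qInt m * a := by
    rw [← geom_sum_mul, ← qInt, inv_mul_eq_iff_eq_mul₀ q_sub_one_ne_zero]
    ring
  simp only [Dq, LinearMap.smul_apply, LinearMap.comp_apply, LinearMap.sub_apply,
    LinearMap.id_apply, AlgHom.toLinearMap_apply, map_mul, map_pow, aeval_X, aeval_C,
    algebraMap_eq, hdiff, divXL_apply]
  rw [← C_mul, ← C_mul, divX_C_mul_X_pow, smul_eq_C_mul]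
  split_ifs with hm
  · simp [hm]
  · rw [← mul_assoc, ← C_mul, hqInt]

def qDescFactorial (n k : ℕ) : F := ∏ i ∈ range k, qInt (n - i)

@[simp] lemma qDescFactorial_zero (n : ℕ) : qDescFactorial n 0 = 1 := prod_range_zero _

lemma qDescFactorial_succ (n k : ℕ) :
    qDescFactorial n (k + 1) = qDescFactorial n k * qInt (n - k) :=
  prod_range_succ _ k

lemma qDescFactorial_succ_succ (n k : ℕ) :
    qDescFactorial (n + 1) (k + 1) = qInt (n + 1) * qDescFactorial n k := by
  simp [qDescFactorial, prod_range_succ', mul_comm]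

lemma qDescFactorial_eq_zero_of_lt {n k : ℕ} (h : n < k) : qDescFactorial n k = 0 :=
  prod_eq_zero (mem_range.mpr h) (by simp)

lemma qFact_eq_qDescFactorial_mul {n k : ℕ} (h : k ≤ n) :
    qFact n = qDescFactorial n k * qFact (n - k) := by
  induction k with
  | zero => simp
  | succ k ih =>
    rw [ih (by omega), qDescFactorial_succ, show n - k = n - (k + 1) + 1 by omega, qFact_succ,
      show n - (k + 1) + 1 = n - k by omega]
    ring


def hWeight (t : F) (j : ℕ) : F :=
  q ^ (j ^ 2) * t ^ j / ((∏ i ∈ range j, (1 + q ^ (i + 1))) * qFact j)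

lemma hWeight_succ_mul (t : F) (j : ℕ) :
    hWeight t (j + 1) * qInt (2 * j + 2) = q ^ (2 * j + 1) * t * hWeight t j := by
  have hprod : ∏ i ∈ range j, (1 + q ^ (i + 1)) ≠ 0 :=
    prod_ne_zero_iff.mpr fun i _ => one_add_q_pow_ne_zero (i + 1)
  have hlast := one_add_q_pow_ne_zero (j + 1)
  have hqInt := qInt_succ_ne_zero j
  have hqFact := qFact_ne_zero j
  rw [hWeight, hWeight, prod_range_succ, qFact_succ, show 2 * j + 2 = 2 * (j + 1) by ring,
    qInt_two_mul]
  field_simp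
  ring

def hCoeff (t : F) (n j : ℕ) : F := hWeight t j * qDescFactorial n (2 * j)

@[simp] lemma hCoeff_zero_right (t : F) (n : ℕ) : hCoeff t n 0 = 1 := by
  simp [hCoeff, hWeight, qFact]

lemma hCoeff_eq_zero_of_lt {t : F} {n j : ℕ} (h : n < 2 * j) : hCoeff t n j = 0 := by
  rw [hCoeff, qDescFactorial_eq_zero_of_lt h, mul_zero]

lemma hCoeff_succ_succ (t : F) (n j : ℕ) :
    hCoeff t (n + 1) (j + 1) = hCoeff t n (j + 1) + q ^ n * t * qInt (n - 2 * j) * hCoeff t n j := by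
  have hdesc : qDescFactorial n (2 * (j + 1)) =
      qDescFactorial n (2 * j) * qInt (n - 2 * j) * qInt (n - (2 * j + 1)) := by
    rw [mul_add, mul_one, qDescFactorial_succ, qDescFactorial_succ]
  have hdesc_succ : qDescFactorial (n + 1) (2 * (j + 1)) =
      qInt (n + 1) * (qDescFactorial n (2 * j) * qInt (n - 2 * j)) := by
    rw [mul_add, mul_one, qDescFactorial_succ_succ, qDescFactorial_succ]
  rw [hCoeff, hCoeff, hCoeff, hdesc, hdesc_succ]
  rcases lt_or_ge n (2 * j + 1) with hn | hn
  · have hzero : qDescFactorial n (2 * j) * qInt (n - 2 * j) = 0 := by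
      rw [← qDescFactorial_succ]
      exact qDescFactorial_eq_zero_of_lt hn
    linear_combination (hWeight t (j + 1) * (qInt (n + 1) - qInt (n - (2 * j + 1))) -
      q ^ n * t * hWeight t j) * hzero
  · obtain ⟨m, rfl⟩ : ∃ m, n = m + (2 * j + 1) := ⟨n - (2 * j + 1), by omega⟩
    rw [Nat.add_sub_cancel, show m + (2 * j + 1) + 1 = m + (2 * j + 2) by ring, qInt_add]
    linear_combination (q ^ m * qDescFactorial (m + (2 * j + 1)) (2 * j) *
      qInt (m + (2 * j + 1) - 2 * j)) * hWeight_succ_mul t j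

lemma h_eq_sum_range (t : F) {n N : ℕ} (hN : n < 2 * N) :
    h t n = ∑ j ∈ range N, C (hCoeff t n j) * X ^ (n - 2 * j) := by
  calc h t n = ∑ j ∈ range (n / 2 + 1), C (hCoeff t n j) * X ^ (n - 2 * j) := by
        refine sum_congr rfl fun j hj => ?_
        have h2j : 2 * j ≤ n := by rw [mem_range] at hj; omega
        rw [qFact_eq_qDescFactorial_mul h2j, ← mul_assoc, mul_div_mul_right _ _ (qFact_ne_zero _),
          hCoeff, hWeight, div_mul_eq_mul_div]
    _ = _ := sum_subset (range_subset_range.mpr (by omega)) fun j _ hj => by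
        rw [mem_range] at hj
        rw [hCoeff_eq_zero_of_lt (by omega), C_0, zero_mul]

lemma X_mul_C_hCoeff_mul_X_pow (t : F) (n j : ℕ) :
    X * (C (hCoeff t n j) * X ^ (n - 2 * j)) = C (hCoeff t n j) * X ^ (n + 1 - 2 * j) := by
  rcases le_or_gt (2 * j) n with h | h
  · rw [show n + 1 - 2 * j = n - 2 * j + 1 by omega, pow_succ]
    ring
  · simp [hCoeff_eq_zero_of_lt h]

lemma h_succ (t : F) (n : ℕ) : h t (n + 1) = (Xop + (q ^ n * t) • Dq) (h t n) := by
  have hterm : ∀ j, (Xop + (q ^ n * t) • Dq) (C (hCoeff t n j) * X ^ (n - 2 * j)) =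
      C (hCoeff t n j) * X ^ (n + 1 - 2 * j) +
        C (q ^ n * t * qInt (n - 2 * j) * hCoeff t n j) * X ^ (n + 1 - 2 * (j + 1)) := by
    intro j
    rw [LinearMap.add_apply, LinearMap.smul_apply, Xop, LinearMap.mulLeft_apply,
      X_mul_C_hCoeff_mul_X_pow, Dq_C_mul_X_pow, smul_eq_C_mul,
      show n - 2 * j - 1 = n + 1 - 2 * (j + 1) by omega]
    simp only [C_mul]
    ring
  rw [h_eq_sum_range t (n := n) (N := n + 2) (by omega), map_sum, sum_congr rfl fun j _ => hterm j,
    sum_add_distrib, sum_range_succ' (fun j => C (hCoeff t n j) * X ^ (n + 1 - 2 * j)),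
    sum_range_succ _ (n + 1), hCoeff_eq_zero_of_lt (show n < 2 * (n + 1) by omega),
    h_eq_sum_range t (n := n + 1) (N := n + 2) (by omega), sum_range_succ']
  simp only [hCoeff_succ_succ, hCoeff_zero_right, C_add, add_mul, sum_add_distrib, mul_zero,
    zero_mul, C_0, add_zero]
  abel

theorem Fop_apply_one (n : ℕ) : Fop n (1 : Polynomial F) = h s n := by
  induction n with
  | zero => simp [Fop, h_eq_sum_range s (N := 1) zero_lt_two]
  | succ n ih => rw [Fop, Module.End.mul_apply, ih, h_succ]

end
end

section
/- For every natural number n ≥ 1, the polynomials h_n satisfy the recurrence h_n(x,s) = x · h_{n-1}(x,q²s) + q s · (D_q h_{n-1})(x,q²s), where h_{n-1}(x,q²s) denotes h_{n-1} with the parameter s replaced by q²s. -/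
noncomputable section

/-! Write the coefficient of `x^{n-2j}` in `h t n` with the falling q-factorial
`[n]_q [n-1]_q ⋯ [n-2j+1]_q` in place of `[n]_q!/[n-2j]_q!`. It then vanishes for `2j > n`, so
all sums may be taken over one common range, and comparing coefficients of `x^{n-2j}` reduces the
recurrence to the splitting `[2j+r]_q = (1+q^j)[j]_q + q^{2j}[r]_q` of q-integers. -/

namespace HRecurrence

open Polynomial Finset

lemma algebraMap_ne_zero_of_constantCoeff_ne_zero {p : MvPolynomial (Fin 2) ℚ}
    (hp : MvPolynomial.constantCoeff p ≠ 0) : algebraMap (MvPolynomial (Fin 2) ℚ) F p ≠ 0 := by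
  rw [Ne, ← map_zero (algebraMap (MvPolynomial (Fin 2) ℚ) F),
    (IsFractionRing.injective (MvPolynomial (Fin 2) ℚ) F).eq_iff]
  rintro rfl
  exact hp (map_zero _)

lemma q_sub_one_ne_zero : q - 1 ≠ 0 := by
  have hq : q - 1 = algebraMap (MvPolynomial (Fin 2) ℚ) F (MvPolynomial.X 0 - 1) := by simp [q]
  rw [hq]
  exact algebraMap_ne_zero_of_constantCoeff_ne_zero (by simp)

lemma qInt_succ_ne_zero (k : ℕ) : qInt (k + 1) ≠ 0 := by
  have hq : qInt (k + 1) =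
      algebraMap (MvPolynomial (Fin 2) ℚ) F (∑ i ∈ range (k + 1), MvPolynomial.X 0 ^ i) := by
    simp [qInt, q]
  rw [hq]
  exact algebraMap_ne_zero_of_constantCoeff_ne_zero (by simp [sum_range_succ'])

lemma one_add_q_pow_succ_ne_zero (i : ℕ) : 1 + q ^ (i + 1) ≠ 0 := by
  have hq : 1 + q ^ (i + 1) =
      algebraMap (MvPolynomial (Fin 2) ℚ) F (1 + MvPolynomial.X 0 ^ (i + 1)) := by
    simp [q]
  rw [hq]
  exact algebraMap_ne_zero_of_constantCoeff_ne_zero (by simp)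

lemma qInt_zero : qInt 0 = 0 := sum_range_zero _

lemma qInt_add (a b : ℕ) : qInt (a + b) = qInt a + q ^ a * qInt b := by
  simp [qInt, sum_range_add, pow_add, mul_sum]

lemma qInt_two_mul_add (j r : ℕ) :
    qInt (2 * j + r) = (1 + q ^ j) * qInt j + q ^ (2 * j) * qInt r := by
  rw [two_mul, add_assoc, qInt_add, qInt_add, pow_add]
  ring

lemma qFact_succ (n : ℕ) : qFact (n + 1) = qFact n * qInt (n + 1) := prod_range_succ _ _

lemma qFact_ne_zero (n : ℕ) : qFact n ≠ 0 :=
  prod_ne_zero_iff.mpr fun k _ => qInt_succ_ne_zero k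

/-- `(-q; q)_j = (1 + q)(1 + q²)⋯(1 + q^j)`. -/
def negQPoch (j : ℕ) : F := ∏ i ∈ range j, (1 + q ^ (i + 1))

lemma negQPoch_succ (j : ℕ) : negQPoch (j + 1) = negQPoch j * (1 + q ^ (j + 1)) :=
  prod_range_succ _ _

lemma negQPoch_ne_zero (j : ℕ) : negQPoch j ≠ 0 :=
  prod_ne_zero_iff.mpr fun i _ => one_add_q_pow_succ_ne_zero i

def qDescFact (n k : ℕ) : F := ∏ i ∈ range k, qInt (n - i)

lemma qDescFact_succ (n k : ℕ) : qDescFact n (k + 1) = qDescFact n k * qInt (n - k) :=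
  prod_range_succ _ _

lemma qDescFact_succ_succ (n k : ℕ) :
    qDescFact (n + 1) (k + 1) = qInt (n + 1) * qDescFact n k := by
  rw [qDescFact, prod_range_succ', mul_comm]
  simp [qDescFact]

lemma qDescFact_eq_zero {n k : ℕ} (h : n < k) : qDescFact n k = 0 :=
  prod_eq_zero (mem_range.mpr h) (by simp [qInt_zero])

lemma qFact_eq_qDescFact_mul {n k : ℕ} (h : k ≤ n) : qFact n = qDescFact n k * qFact (n - k) := by
  induction k with
  | zero => simp [qDescFact]
  | succ k ih =>
    obtain ⟨r, hr⟩ : ∃ r, n - k = r + 1 := ⟨n - k - 1, by omega⟩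
    rw [ih (by omega), qDescFact_succ, hr, qFact_succ, show n - (k + 1) = r by omega]
    ring

def coeffH (t : F) (n j : ℕ) : F :=
  q ^ (j ^ 2) * t ^ j * qDescFact n (2 * j) / (negQPoch j * qFact j)

lemma coeffH_zero (t : F) (n : ℕ) : coeffH t n 0 = 1 := by
  simp [coeffH, qDescFact, negQPoch, qFact]

lemma coeffH_eq_zero {t : F} {n j : ℕ} (h : n < 2 * j) : coeffH t n j = 0 := by
  simp [coeffH, qDescFact_eq_zero h]

lemma h_eq_sum_range (t : F) {n N : ℕ} (hN : n / 2 < N) :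
    h t n = ∑ j ∈ range N, C (coeffH t n j) * X ^ (n - 2 * j) := by
  calc h t n = ∑ j ∈ range (n / 2 + 1), C (coeffH t n j) * X ^ (n - 2 * j) := by
        refine sum_congr rfl fun j hj => ?_
        rw [mem_range] at hj
        rw [coeffH, qFact_eq_qDescFact_mul (k := 2 * j) (by omega), negQPoch]
        congr 2
        field_simp [qFact_ne_zero]
    _ = _ := sum_subset (range_subset_range.mpr hN) fun j _ hj => by
        rw [coeffH_eq_zero (by rw [mem_range] at hj; omega), C_0, zero_mul]

lemma Dq_X_pow (k : ℕ) : Dq (X ^ k) = C (qInt k) * X ^ (k - 1) := by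
  have hdiff : (C q * X) ^ k - X ^ k = C ((q - 1) * qInt k) * X ^ k := by
    rw [mul_comm (q - 1), qInt, geom_sum_mul, mul_pow, ← C_pow, C_sub, C_1]
    ring
  simp only [Dq, LinearMap.smul_apply, LinearMap.comp_apply, LinearMap.sub_apply,
    AlgHom.toLinearMap_apply, LinearMap.id_apply, map_pow, aeval_X, hdiff]
  change (q - 1)⁻¹ • divX (C ((q - 1) * qInt k) * X ^ k) = _
  rcases k with _ | k
  · simp [qInt_zero]
  · rw [divX_C_mul_X_pow, if_neg k.succ_ne_zero, smul_eq_C_mul, ← mul_assoc, ← C_mul,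
      inv_mul_cancel_left₀ q_sub_one_ne_zero]

lemma Dq_C_mul_X_pow (a : F) (k : ℕ) : Dq (C a * X ^ k) = C (a * qInt k) * X ^ (k - 1) := by
  rw [← smul_eq_C_mul, map_smul, Dq_X_pow, smul_eq_C_mul, ← mul_assoc, ← C_mul]

lemma qInt_succ_mul_qDescFact (m j : ℕ) :
    qInt (m + 1) * qDescFact m (2 * j + 1) =
      ((1 + q ^ (j + 1)) * qInt (j + 1) + q ^ (2 * (j + 1)) * qInt (m - (2 * j + 1))) *
        qDescFact m (2 * j + 1) := by
  rcases lt_or_ge m (2 * j + 1) with hm | hm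
  · simp [qDescFact_eq_zero hm]
  · obtain ⟨r, rfl⟩ := Nat.exists_eq_add_of_le hm
    rw [show 2 * j + 1 + r + 1 = 2 * (j + 1) + r by ring, qInt_two_mul_add, Nat.add_sub_cancel_left]

lemma coeffH_succ_succ (t : F) (m j : ℕ) :
    coeffH t (m + 1) (j + 1) =
      coeffH (q ^ 2 * t) m (j + 1) + q * t * coeffH (q ^ 2 * t) m j * qInt (m - 2 * j) := by
  have hE := qInt_succ_mul_qDescFact m j
  simp only [coeffH, show 2 * (j + 1) = 2 * j + 1 + 1 by ring, qDescFact_succ_succ,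
    qDescFact_succ m (2 * j + 1), negQPoch_succ, qFact_succ]
  field_simp [negQPoch_ne_zero, one_add_q_pow_succ_ne_zero, qFact_ne_zero, qInt_succ_ne_zero]
  rw [qDescFact_succ m (2 * j)] at hE ⊢
  linear_combination (q ^ (j + 1) ^ 2 * t ^ (j + 1)) * hE

lemma X_mul_C_coeffH_mul_X_pow (t : F) (m j : ℕ) :
    X * (C (coeffH t m j) * X ^ (m - 2 * j)) = C (coeffH t m j) * X ^ (m + 1 - 2 * j) := by
  rcases le_or_gt (2 * j) m with hj | hj
  · rw [show m + 1 - 2 * j = m - 2 * j + 1 by omega, pow_succ]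
    ring
  · simp [coeffH_eq_zero hj]

theorem h_succ (t : F) (m : ℕ) :
    h t (m + 1) = X * h (q ^ 2 * t) m + C (q * t) * Dq (h (q ^ 2 * t) m) := by
  have hX : X * h (q ^ 2 * t) m =
      ∑ j ∈ range (m + 2), C (coeffH (q ^ 2 * t) m j) * X ^ (m + 1 - 2 * j) := by
    rw [h_eq_sum_range _ (N := m + 2) (by omega), mul_sum]
    exact sum_congr rfl fun j _ => X_mul_C_coeffH_mul_X_pow _ m j
  have hD : C (q * t) * Dq (h (q ^ 2 * t) m) = ∑ j ∈ range (m + 1),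
      C (q * t * coeffH (q ^ 2 * t) m j * qInt (m - 2 * j)) * X ^ (m + 1 - 2 * (j + 1)) := by
    rw [h_eq_sum_range _ (N := m + 1) (by omega), map_sum, mul_sum]
    refine sum_congr rfl fun j _ => ?_
    rw [Dq_C_mul_X_pow, ← mul_assoc, ← C_mul, ← mul_assoc,
      show m - 2 * j - 1 = m + 1 - 2 * (j + 1) by omega]
  rw [hX, hD, h_eq_sum_range t (N := m + 2) (by omega), sum_range_succ', sum_range_succ' _ (m + 1)]
  simp only [coeffH_succ_succ, coeffH_zero, C_add, add_mul, sum_add_distrib]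
  ring

end HRecurrence

theorem h_recurrence_q2 (n : ℕ) (hn : 1 ≤ n) :
    h s n =
      Polynomial.X * h (q ^ 2 * s) (n - 1) +
        Polynomial.C (q * s) * Dq (h (q ^ 2 * s) (n - 1)) := by
  obtain ⟨m, rfl⟩ := Nat.exists_eq_add_of_le' hn
  exact HRecurrence.h_succ s m

end
end
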